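/- arXiv:1401.3505 — 3 statements merged into one kernel-verified Lean document; each statement's English description precedes it below -/
import Mathlib

section
/- If f is a holomorphic solution of f''' = -24 f f'' + 36 (f')² on a domain, and A = [[a,b],[c,d]] ∈ GL(2,ℂ), then the function f^A(t) := det(A)/(ct+d)² · f((at+b)/(ct+d)) + c/(2(ct+d)) is also a solution of the same differential equation on a suitable domain. -/
/-- The `GL(2,ℂ)`-action on functions:
`f^A(t) = det(A)/(ct+d)² · f((at+b)/(ct+d)) + c/(2(ct+d))`. -/
noncomputable def glAction (a b c d : ℂ) (f : ℂ → ℂ) : ℂ → ℂ := fun t =>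
  (a * d - b * c) / (c * t + d) ^ 2 * f ((a * t + b) / (c * t + d)) + c / (2 * (c * t + d))

/-!
With `w = (ct+d)⁻¹`, `s = (at+b)/(ct+d)` and `Δ = ad - bc` one has `w' = -c w²` and `s' = Δ w²`,
so each derivative of `f^A = Δ w² (f ∘ s) + (c/2) w` is again a combination of the terms
`wⁿ (f⁽ᵏ⁾ ∘ s)` and `wⁿ`. Computing `(f^A)'`, `(f^A)''`, `(f^A)'''` this way and substituting the
equation for `f'''(s)`, the equation for `f^A` becomes a polynomial identity in `w`, `c`, `Δ`
and `f(s), f'(s), f''(s)`.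
-/

namespace GLAction

variable (a b c d : ℂ)

noncomputable def term (n : ℕ) (g : ℂ → ℂ) (t : ℂ) : ℂ :=
  (c * t + d)⁻¹ ^ n * g ((a * t + b) / (c * t + d))

def domain (f : ℂ → ℂ) : Set ℂ :=
  {t | c * t + d ≠ 0 ∧ AnalyticAt ℂ f ((a * t + b) / (c * t + d))}

noncomputable def deriv₁ (f : ℂ → ℂ) (t : ℂ) : ℂ :=
  -2 * c * (a * d - b * c) * term a b c d 3 f t
    + (a * d - b * c) ^ 2 * term a b c d 4 (deriv f) t
    - c ^ 2 / 2 * (c * t + d)⁻¹ ^ 2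

noncomputable def deriv₂ (f : ℂ → ℂ) (t : ℂ) : ℂ :=
  6 * c ^ 2 * (a * d - b * c) * term a b c d 4 f t
    - 6 * c * (a * d - b * c) ^ 2 * term a b c d 5 (deriv f) t
    + (a * d - b * c) ^ 3 * term a b c d 6 (deriv (deriv f)) t
    + c ^ 3 * (c * t + d)⁻¹ ^ 3

noncomputable def deriv₃ (f : ℂ → ℂ) (t : ℂ) : ℂ :=
  -24 * c ^ 3 * (a * d - b * c) * term a b c d 5 f t
    + 36 * c ^ 2 * (a * d - b * c) ^ 2 * term a b c d 6 (deriv f) t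
    - 12 * c * (a * d - b * c) ^ 3 * term a b c d 7 (deriv (deriv f)) t
    + (a * d - b * c) ^ 4 * term a b c d 8 (deriv (deriv (deriv f))) t
    - 3 * c ^ 4 * (c * t + d)⁻¹ ^ 4

variable {a b c d}

theorem isOpen_domain {f : ℂ → ℂ} : IsOpen (domain a b c d f) := by
  have hden : IsOpen {t : ℂ | c * t + d ≠ 0} :=
    isOpen_ne_fun (by fun_prop) continuous_const
  have hs : ContinuousOn (fun t : ℂ => (a * t + b) / (c * t + d)) {t | c * t + d ≠ 0} :=
    (continuousOn_id.const_smul a |>.add continuousOn_const).div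
      (continuousOn_id.const_smul c |>.add continuousOn_const) fun _ ht => ht
  exact hs.isOpen_inter_preimage hden (isOpen_analyticAt ℂ f)

theorem domain_deriv {f : ℂ → ℂ} {t : ℂ} (ht : t ∈ domain a b c d f) :
    t ∈ domain a b c d (deriv f) :=
  ⟨ht.1, ht.2.deriv⟩

theorem hasDerivAt_affine (p q t : ℂ) : HasDerivAt (fun t => p * t + q) p t := by
  simpa using ((hasDerivAt_id t).const_mul p).add_const q

theorem hasDerivAt_inv_pow {t : ℂ} (ht : c * t + d ≠ 0) (n : ℕ) :
    HasDerivAt (fun t => (c * t + d)⁻¹ ^ n) (-(n * c) * (c * t + d)⁻¹ ^ (n + 1)) t := by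
  have hinv : HasDerivAt (fun t => (c * t + d)⁻¹) (-c / (c * t + d) ^ 2) t :=
    (hasDerivAt_affine c d t).inv ht
  refine (hinv.pow n).congr_deriv ?_
  rcases n with _ | n
  · simp
  · push_cast
    simp only [div_eq_mul_inv, ← inv_pow]
    ring

theorem hasDerivAt_mobius {t : ℂ} (ht : c * t + d ≠ 0) :
    HasDerivAt (fun t => (a * t + b) / (c * t + d)) ((a * d - b * c) * (c * t + d)⁻¹ ^ 2) t := by
  refine ((hasDerivAt_affine a b t).div (hasDerivAt_affine c d t) ht).congr_deriv ?_
  field_simp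
  ring

theorem hasDerivAt_term {g : ℂ → ℂ} {t : ℂ} (ht : c * t + d ≠ 0)
    (hg : DifferentiableAt ℂ g ((a * t + b) / (c * t + d))) (n : ℕ) :
    HasDerivAt (term a b c d n g)
      (-(n * c) * term a b c d (n + 1) g t
        + (a * d - b * c) * term a b c d (n + 2) (deriv g) t) t := by
  refine ((hasDerivAt_inv_pow ht n).mul
    (hg.hasDerivAt.comp t (hasDerivAt_mobius ht))).congr_deriv ?_
  simp only [term, Function.comp_apply]
  ring

theorem hasDerivAt_glAction {f : ℂ → ℂ} {t : ℂ} (ht : t ∈ domain a b c d f) :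
    HasDerivAt (glAction a b c d f) (deriv₁ a b c d f t) t := by
  have hf : glAction a b c d f =
      fun t => (a * d - b * c) * term a b c d 2 f t + c / 2 * (c * t + d)⁻¹ ^ 1 := by
    funext t
    simp only [glAction, term, div_eq_mul_inv, mul_inv, inv_pow]
    ring
  rw [hf]
  refine (((hasDerivAt_term ht.1 ht.2.differentiableAt 2).const_mul _).add
    ((hasDerivAt_inv_pow ht.1 1).const_mul _)).congr_deriv ?_
  simp only [deriv₁]
  push_cast
  ring

theorem hasDerivAt_deriv₁ {f : ℂ → ℂ} {t : ℂ} (ht : t ∈ domain a b c d f) :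
    HasDerivAt (deriv₁ a b c d f) (deriv₂ a b c d f t) t := by
  have hf' := domain_deriv ht
  refine ((((hasDerivAt_term ht.1 ht.2.differentiableAt 3).const_mul _).add
    ((hasDerivAt_term ht.1 hf'.2.differentiableAt 4).const_mul _)).sub
    ((hasDerivAt_inv_pow ht.1 2).const_mul _)).congr_deriv ?_
  simp only [deriv₂]
  push_cast
  ring

theorem hasDerivAt_deriv₂ {f : ℂ → ℂ} {t : ℂ} (ht : t ∈ domain a b c d f) :
    HasDerivAt (deriv₂ a b c d f) (deriv₃ a b c d f t) t := by
  have hf' := domain_deriv ht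
  have hf'' := domain_deriv hf'
  refine (((((hasDerivAt_term ht.1 ht.2.differentiableAt 4).const_mul _).sub
    ((hasDerivAt_term ht.1 hf'.2.differentiableAt 5).const_mul _)).add
    ((hasDerivAt_term ht.1 hf''.2.differentiableAt 6).const_mul _)).add
    ((hasDerivAt_inv_pow ht.1 3).const_mul _)).congr_deriv ?_
  simp only [deriv₃]
  push_cast
  ring

variable (a b c d) in
theorem iteratedDeriv_glAction_eqOn (f : ℂ → ℂ) :
    Set.EqOn (deriv (glAction a b c d f)) (deriv₁ a b c d f) (domain a b c d f) ∧
    Set.EqOn (iteratedDeriv 2 (glAction a b c d f)) (deriv₂ a b c d f) (domain a b c d f) ∧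
    Set.EqOn (iteratedDeriv 3 (glAction a b c d f)) (deriv₃ a b c d f) (domain a b c d f) := by
  have e₁ : Set.EqOn (deriv (glAction a b c d f)) (deriv₁ a b c d f) (domain a b c d f) :=
    fun t ht => (hasDerivAt_glAction ht).deriv
  have e₂ : Set.EqOn (deriv (deriv (glAction a b c d f))) (deriv₂ a b c d f) (domain a b c d f) :=
    fun t ht => (e₁.deriv isOpen_domain ht).trans (hasDerivAt_deriv₁ ht).deriv
  have e₃ : Set.EqOn (deriv (deriv (deriv (glAction a b c d f)))) (deriv₃ a b c d f)
      (domain a b c d f) :=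
    fun t ht => (e₂.deriv isOpen_domain ht).trans (hasDerivAt_deriv₂ ht).deriv
  rw [iteratedDeriv_eq_iterate, iteratedDeriv_eq_iterate]
  exact ⟨e₁, e₂, e₃⟩

theorem deriv₃_eq {f : ℂ → ℂ} {t : ℂ} (ht : c * t + d ≠ 0)
    (hode : deriv (deriv (deriv f)) ((a * t + b) / (c * t + d)) =
      -24 * f ((a * t + b) / (c * t + d)) * deriv (deriv f) ((a * t + b) / (c * t + d))
        + 36 * deriv f ((a * t + b) / (c * t + d)) ^ 2) :
    deriv₃ a b c d f t =
      -24 * glAction a b c d f t * deriv₂ a b c d f t + 36 * deriv₁ a b c d f t ^ 2 := by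
  simp only [deriv₃, deriv₂, deriv₁, term, glAction, hode]
  field_simp
  ring

end GLAction

open GLAction in
theorem wdvv_glAction_general (U : Set ℂ) (f : ℂ → ℂ)
    (hf : AnalyticOnNhd ℂ f U)
    (hode : ∀ t ∈ U, iteratedDeriv 3 f t =
      -24 * f t * iteratedDeriv 2 f t + 36 * (deriv f t) ^ 2)
    (a b c d : ℂ) :
    ∀ t : ℂ, c * t + d ≠ 0 → (a * t + b) / (c * t + d) ∈ U →
      iteratedDeriv 3 (glAction a b c d f) t =
        -24 * glAction a b c d f t * iteratedDeriv 2 (glAction a b c d f) t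
          + 36 * (deriv (glAction a b c d f) t) ^ 2 := by
  intro t ht hsU
  have hdom : t ∈ domain a b c d f := ⟨ht, hf _ hsU⟩
  obtain ⟨e₁, e₂, e₃⟩ := iteratedDeriv_glAction_eqOn a b c d f
  rw [e₁ hdom, e₂ hdom, e₃ hdom]
  have hode_s := hode _ hsU
  rw [iteratedDeriv_eq_iterate, iteratedDeriv_eq_iterate] at hode_s
  exact deriv₃_eq ht hode_s

/-- If `f` is a holomorphic solution of `f''' = -24 f f'' + 36 (f')²` on a domain `U`
and `A = [[a,b],[c,d]] ∈ GL(2,ℂ)`, then `f^A` solves the same equation on a suitable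
domain. -/
theorem wdvv_glAction (U : Set ℂ) (hU : IsOpen U) (f : ℂ → ℂ)
    (hf : AnalyticOnNhd ℂ f U)
    (hode : ∀ t ∈ U, iteratedDeriv 3 f t =
      -24 * f t * iteratedDeriv 2 f t + 36 * (deriv f t) ^ 2)
    (a b c d : ℂ) (hA : a * d - b * c ≠ 0) :
    ∀ t : ℂ, c * t + d ≠ 0 → (a * t + b) / (c * t + d) ∈ U →
      iteratedDeriv 3 (glAction a b c d f) t =
        -24 * glAction a b c d f t * iteratedDeriv 2 (glAction a b c d f) t
          + 36 * (deriv (glAction a b c d f) t) ^ 2 :=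
  wdvv_glAction_general U f hf hode a b c d
end

section
/- If c_0, c_1, c_2 ∈ ℂ satisfy 32(c_1 + 2c_0²)³ - (c_2 + 12 c_1 c_0 + 16 c_0³)² = 0, then there exist α, β ∈ ℂ such that c_0 = α + β/2, c_1 = -2αβ - β²/2, and c_2 = 6αβ² + β³. -/
/-- If `c₀, c₁, c₂ ∈ ℂ` satisfy `32(c₁+2c₀²)³ - (c₂+12c₁c₀+16c₀³)² = 0`, then
there exist `α, β ∈ ℂ` with `c₀ = α + β/2`, `c₁ = -2αβ - β²/2`, `c₂ = 6αβ² + β³`. -/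
theorem exists_alpha_beta (c₀ c₁ c₂ : ℂ)
    (h : 32 * (c₁ + 2 * c₀ ^ 2) ^ 3 - (c₂ + 12 * c₁ * c₀ + 16 * c₀ ^ 3) ^ 2 = 0) :
    ∃ α β : ℂ, c₀ = α + β / 2 ∧ c₁ = -2 * α * β - β ^ 2 / 2 ∧
      c₂ = 6 * α * β ^ 2 + β ^ 3 := by
  obtain ⟨s, hs⟩ := IsAlgClosed.exists_pow_nat_eq ((c₁ + 2 * c₀ ^ 2) / 2) (n := 2)
    (by norm_num)
  have key : (16 * s ^ 3 - (c₂ + 12 * c₁ * c₀ + 16 * c₀ ^ 3)) *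
      (16 * s ^ 3 + (c₂ + 12 * c₁ * c₀ + 16 * c₀ ^ 3)) = 0 := by
    linear_combination (256 * s ^ 4 + 128 * s ^ 2 * (c₁ + 2 * c₀ ^ 2)
      + 64 * (c₁ + 2 * c₀ ^ 2) ^ 2) * hs + h
  rcases mul_eq_zero.mp key with hk | hk
  · refine ⟨s, 2 * (c₀ - s), by ring, ?_, ?_⟩
    · linear_combination -2 * hs
    · linear_combination -hk + 24 * c₀ * hs
  · refine ⟨-s, 2 * (c₀ + s), by ring, ?_, ?_⟩
    · linear_combination -2 * hs
    · linear_combination hk + 24 * c₀ * hs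
end

section
/- If functions X_2, X_3, X_4 satisfy Halphen's system (X_2+X_3)' = 2X_2X_3, (X_3+X_4)' = 2X_3X_4, (X_4+X_2)' = 2X_4X_2 on a domain, then f := -(1/6)(X_2 + X_3 + X_4) satisfies f''' = -24 f f'' + 36 (f')². -/
/-!
Solving Halphen's system for the individual derivatives shows that the elementary symmetric
functions `σ₁ = X₂ + X₃ + X₄`, `σ₂ = X₂X₃ + X₃X₄ + X₄X₂`, `σ₃ = X₂X₃X₄` satisfy the closed system
`σ₁' = σ₂`, `σ₂' = 6σ₃`, `σ₃' = 4σ₁σ₃ - σ₂²`. With `f = -σ₁/6` this reads `f' = -σ₂/6`,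
`f'' = -σ₃` and `f''' = σ₂² - 4σ₁σ₃ = -24 f f'' + 36 f'²`.
-/

variable {𝕜 : Type*} [NontriviallyNormedField 𝕜]

/-- Halphen's system `(X₂ + X₃)' = 2X₂X₃`, `(X₃ + X₄)' = 2X₃X₄`, `(X₄ + X₂)' = 2X₄X₂`,
solved for the individual derivatives. -/
def HalphenOn (U : Set 𝕜) (X₂ X₃ X₄ : 𝕜 → 𝕜) : Prop :=
  ∀ t ∈ U, HasDerivAt X₂ (X₂ t * X₃ t + X₄ t * X₂ t - X₃ t * X₄ t) t ∧
    HasDerivAt X₃ (X₃ t * X₄ t + X₂ t * X₃ t - X₄ t * X₂ t) t ∧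
    HasDerivAt X₄ (X₄ t * X₂ t + X₃ t * X₄ t - X₂ t * X₃ t) t

theorem hasDerivAt_deriv_of_isOpen {F : Type*} [NormedAddCommGroup F] [NormedSpace 𝕜 F]
    {U : Set 𝕜} (hU : IsOpen U) {f g g' : 𝕜 → F}
    (hf : ∀ t ∈ U, HasDerivAt f (g t) t) (hg : ∀ t ∈ U, HasDerivAt g (g' t) t) :
    ∀ t ∈ U, HasDerivAt (deriv f) (g' t) t := fun t ht =>
  (hg t ht).congr_of_eventuallyEq <|
    Filter.eventually_of_mem (hU.mem_nhds ht) fun s hs => (hf s hs).deriv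

theorem hasDerivAt_of_deriv_add_eq [CharZero 𝕜] {X₂ X₃ X₄ : 𝕜 → 𝕜} {t : 𝕜}
    (d₂ : DifferentiableAt 𝕜 X₂ t) (d₃ : DifferentiableAt 𝕜 X₃ t)
    (d₄ : DifferentiableAt 𝕜 X₄ t)
    (h₂₃ : deriv (fun s => X₂ s + X₃ s) t = 2 * X₂ t * X₃ t)
    (h₃₄ : deriv (fun s => X₃ s + X₄ s) t = 2 * X₃ t * X₄ t)
    (h₄₂ : deriv (fun s => X₄ s + X₂ s) t = 2 * X₄ t * X₂ t) :
    HasDerivAt X₂ (X₂ t * X₃ t + X₄ t * X₂ t - X₃ t * X₄ t) t := by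
  rw [deriv_fun_add d₂ d₃] at h₂₃
  rw [deriv_fun_add d₃ d₄] at h₃₄
  rw [deriv_fun_add d₄ d₂] at h₄₂
  refine d₂.hasDerivAt.congr_deriv ?_
  linear_combination (1 / 2 : 𝕜) * (h₂₃ - h₃₄ + h₄₂)

theorem halphenOn_of_deriv_add_eq [CharZero 𝕜] {U : Set 𝕜} {X₂ X₃ X₄ : 𝕜 → 𝕜}
    (d₂ : ∀ t ∈ U, DifferentiableAt 𝕜 X₂ t) (d₃ : ∀ t ∈ U, DifferentiableAt 𝕜 X₃ t)
    (d₄ : ∀ t ∈ U, DifferentiableAt 𝕜 X₄ t)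
    (h₂₃ : ∀ t ∈ U, deriv (fun s => X₂ s + X₃ s) t = 2 * X₂ t * X₃ t)
    (h₃₄ : ∀ t ∈ U, deriv (fun s => X₃ s + X₄ s) t = 2 * X₃ t * X₄ t)
    (h₄₂ : ∀ t ∈ U, deriv (fun s => X₄ s + X₂ s) t = 2 * X₄ t * X₂ t) :
    HalphenOn U X₂ X₃ X₄ := fun t ht =>
  ⟨hasDerivAt_of_deriv_add_eq (d₂ t ht) (d₃ t ht) (d₄ t ht) (h₂₃ t ht) (h₃₄ t ht) (h₄₂ t ht),
    hasDerivAt_of_deriv_add_eq (d₃ t ht) (d₄ t ht) (d₂ t ht) (h₃₄ t ht) (h₄₂ t ht) (h₂₃ t ht),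
    hasDerivAt_of_deriv_add_eq (d₄ t ht) (d₂ t ht) (d₃ t ht) (h₄₂ t ht) (h₂₃ t ht) (h₃₄ t ht)⟩

namespace HalphenOn

variable {U : Set 𝕜} {X₂ X₃ X₄ : 𝕜 → 𝕜} {t : 𝕜}

theorem hasDerivAt_add_add (h : HalphenOn U X₂ X₃ X₄) (ht : t ∈ U) :
    HasDerivAt (fun s => X₂ s + X₃ s + X₄ s)
      (X₂ t * X₃ t + X₃ t * X₄ t + X₄ t * X₂ t) t := by
  obtain ⟨h₂, h₃, h₄⟩ := h t ht
  exact ((h₂.fun_add h₃).fun_add h₄).congr_deriv (by ring)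

theorem hasDerivAt_pairwise_mul (h : HalphenOn U X₂ X₃ X₄) (ht : t ∈ U) :
    HasDerivAt (fun s => X₂ s * X₃ s + X₃ s * X₄ s + X₄ s * X₂ s)
      (6 * (X₂ t * X₃ t * X₄ t)) t := by
  obtain ⟨h₂, h₃, h₄⟩ := h t ht
  exact (((h₂.fun_mul h₃).fun_add (h₃.fun_mul h₄)).fun_add (h₄.fun_mul h₂)).congr_deriv
    (by ring)

theorem hasDerivAt_mul_mul (h : HalphenOn U X₂ X₃ X₄) (ht : t ∈ U) :
    HasDerivAt (fun s => X₂ s * X₃ s * X₄ s)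
      (4 * (X₂ t + X₃ t + X₄ t) * (X₂ t * X₃ t * X₄ t)
        - (X₂ t * X₃ t + X₃ t * X₄ t + X₄ t * X₂ t) ^ 2) t := by
  obtain ⟨h₂, h₃, h₄⟩ := h t ht
  exact ((h₂.fun_mul h₃).fun_mul h₄).congr_deriv (by ring)

theorem iteratedDeriv_three_eq [CharZero 𝕜] (hU : IsOpen U) (h : HalphenOn U X₂ X₃ X₄) :
    ∀ t ∈ U, iteratedDeriv 3 (fun s => -(1 / 6) * (X₂ s + X₃ s + X₄ s)) t =
      -24 * ((fun s => -(1 / 6) * (X₂ s + X₃ s + X₄ s)) t)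
          * iteratedDeriv 2 (fun s => -(1 / 6) * (X₂ s + X₃ s + X₄ s)) t
        + 36 * (deriv (fun s => -(1 / 6) * (X₂ s + X₃ s + X₄ s)) t) ^ 2 := by
  set f : 𝕜 → 𝕜 := fun s => -(1 / 6) * (X₂ s + X₃ s + X₄ s)
  have hf' : ∀ t ∈ U, HasDerivAt f (-(1 / 6) * (X₂ t * X₃ t + X₃ t * X₄ t + X₄ t * X₂ t)) t :=
    fun t ht => (h.hasDerivAt_add_add ht).const_mul _
  have hf'' : ∀ t ∈ U, HasDerivAt (deriv f) (-(X₂ t * X₃ t * X₄ t)) t :=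
    hasDerivAt_deriv_of_isOpen hU hf' fun t ht =>
      ((h.hasDerivAt_pairwise_mul ht).const_mul _).congr_deriv (by ring)
  have hf''' := hasDerivAt_deriv_of_isOpen hU hf'' fun t ht => (h.hasDerivAt_mul_mul ht).fun_neg
  intro t ht
  simp only [iteratedDeriv_succ, iteratedDeriv_zero]
  rw [(hf''' t ht).deriv, (hf'' t ht).deriv, (hf' t ht).deriv]
  ring

end HalphenOn

/-- If `X₂, X₃, X₄` satisfy Halphen's system on an open domain `U`, then
`f := -(1/6)(X₂ + X₃ + X₄)` satisfies `f''' = -24 f f'' + 36 (f')²` on `U`. -/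
theorem wdvv_of_halphen (U : Set ℂ) (hU : IsOpen U) (X₂ X₃ X₄ : ℂ → ℂ)
    (h2 : AnalyticOnNhd ℂ X₂ U) (h3 : AnalyticOnNhd ℂ X₃ U) (h4 : AnalyticOnNhd ℂ X₄ U)
    (hal1 : ∀ t ∈ U, deriv (fun s => X₂ s + X₃ s) t = 2 * X₂ t * X₃ t)
    (hal2 : ∀ t ∈ U, deriv (fun s => X₃ s + X₄ s) t = 2 * X₃ t * X₄ t)
    (hal3 : ∀ t ∈ U, deriv (fun s => X₄ s + X₂ s) t = 2 * X₄ t * X₂ t) :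
    ∀ t ∈ U, iteratedDeriv 3 (fun s => -(1 / 6) * (X₂ s + X₃ s + X₄ s)) t =
      -24 * ((fun s => -(1 / 6) * (X₂ s + X₃ s + X₄ s)) t)
          * iteratedDeriv 2 (fun s => -(1 / 6) * (X₂ s + X₃ s + X₄ s)) t
        + 36 * (deriv (fun s => -(1 / 6) * (X₂ s + X₃ s + X₄ s)) t) ^ 2 :=
  (halphenOn_of_deriv_add_eq (fun t ht => (h2 t ht).differentiableAt)
    (fun t ht => (h3 t ht).differentiableAt) (fun t ht => (h4 t ht).differentiableAt)
    hal1 hal2 hal3).iteratedDeriv_three_eq hU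
end
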